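/- arXiv:2310.04854 — 3 statements merged into one kernel-verified Lean document; each statement's English description precedes it below -/
import Mathlib

section
/- Let N ≥ 1, let P be an N×N real matrix with nonnegative entries whose rows each sum to 1 (row-stochastic), and let p ∈ (0,1). Define the PageRank vector π ∈ ℝ^N by π_i = (p/N) · Σ_{j=1}^N Σ_{k=0}^∞ (1−p)^k (P^k)_{j i} (the inner series converges absolutely since every entry of P^k lies in [0,1]). Then π is the stationary distribution of the PageRank transition matrix P̃ := (1−p)P + (p/N)E, where E is the all-ones N×N matrix: namely Σ_{i=1}^N π_i = 1 and, for every i, Σ_{j=1}^N π_j P̃_{j i} = π_i. -/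
open scoped BigOperators

/-!
With `q = 1 - p`, the PageRank vector is `π = (p/N) 𝟙ᵀ R` for the Neumann series
`R = ∑ qᵏ Pᵏ = (1 - qP)⁻¹`, which converges entrywise because powers of a stochastic matrix
stay stochastic. Splitting off the first term gives `R = 1 + q R P`. Applied to `𝟙` this yields
row sums `R 𝟙 = p⁻¹ 𝟙`, hence `∑ π = 1`; multiplied by `(p/N) 𝟙ᵀ` on the left it yields
`π = p/N 𝟙ᵀ + q π P = π P̃`, using `π E = (∑ π) 𝟙ᵀ`.
-/

open Matrix Finset

namespace Matrix

variable {n : Type*} [Fintype n] [DecidableEq n] {P : Matrix n n ℝ} {q : ℝ}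

noncomputable def resolventSum (q : ℝ) (P : Matrix n n ℝ) : Matrix n n ℝ :=
  ∑' k : ℕ, q ^ k • P ^ k

theorem summable_smul_pow_of_mem_rowStochastic (hP : P ∈ rowStochastic ℝ n)
    (hq0 : 0 ≤ q) (hq1 : q < 1) : Summable fun k : ℕ => q ^ k • P ^ k := by
  refine Pi.summable.2 fun j => Pi.summable.2 fun i => ?_
  have hPk : ∀ k : ℕ, P ^ k ∈ rowStochastic ℝ n := fun k => pow_mem hP k
  refine (summable_geometric_of_lt_one hq0 hq1).of_nonneg_of_le
    (fun k => mul_nonneg (pow_nonneg hq0 k) (nonneg_of_mem_rowStochastic (hPk k))) fun k => ?_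
  exact mul_le_of_le_one_right (pow_nonneg hq0 k) (le_one_of_mem_rowStochastic (hPk k))

theorem resolventSum_apply (hP : P ∈ rowStochastic ℝ n) (hq0 : 0 ≤ q) (hq1 : q < 1) (j i : n) :
    resolventSum q P j i = ∑' k : ℕ, q ^ k * (P ^ k) j i := by
  have hs := summable_smul_pow_of_mem_rowStochastic hP hq0 hq1
  change (∑' k : ℕ, q ^ k • P ^ k : n → n → ℝ) j i = _
  rw [tsum_apply hs, tsum_apply (Pi.summable.1 hs j)]
  rfl

theorem resolventSum_eq_one_add (hP : P ∈ rowStochastic ℝ n) (hq0 : 0 ≤ q) (hq1 : q < 1) :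
    resolventSum q P = 1 + q • (resolventSum q P * P) := by
  have hs := summable_smul_pow_of_mem_rowStochastic hP hq0 hq1
  calc resolventSum q P = q ^ 0 • P ^ 0 + ∑' k : ℕ, q ^ (k + 1) • P ^ (k + 1) :=
        hs.tsum_eq_zero_add
    _ = 1 + ∑' k : ℕ, q • (q ^ k • P ^ k * P) := by
        simp only [pow_zero, one_smul, pow_succ, smul_mul_assoc, mul_comm _ q, mul_smul]
    _ = 1 + q • (resolventSum q P * P) := by
        rw [(hs.mul_right P).tsum_const_smul, hs.tsum_mul_right, resolventSum]

theorem resolventSum_mulVec_one (hP : P ∈ rowStochastic ℝ n) (hq0 : 0 ≤ q) (hq1 : q < 1) :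
    resolventSum q P *ᵥ 1 = (1 - q)⁻¹ • 1 := by
  have h := congrArg (· *ᵥ (1 : n → ℝ)) (resolventSum_eq_one_add hP hq0 hq1)
  simp only [add_mulVec, one_mulVec, smul_mulVec, ← mulVec_mulVec,
    one_vecMul_of_mem_rowStochastic hP] at h
  have hq : (1 - q) ≠ 0 := by linarith
  rw [eq_inv_smul_iff₀ hq, sub_smul, one_smul]
  rwa [sub_eq_iff_eq_add]

theorem vecMul_resolventSum (hP : P ∈ rowStochastic ℝ n) (hq0 : 0 ≤ q) (hq1 : q < 1)
    (x : n → ℝ) : x ᵥ* resolventSum q P = x + q • (x ᵥ* resolventSum q P ᵥ* P) := by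
  conv_lhs => rw [resolventSum_eq_one_add hP hq0 hq1]
  rw [vecMul_add, vecMul_one, vecMul_smul, vecMul_vecMul]

end Matrix

theorem pagerank_stationary
    (N : ℕ) (hN : 1 ≤ N)
    (P : Matrix (Fin N) (Fin N) ℝ)
    (hnonneg : ∀ i j, 0 ≤ P i j)
    (hrow : ∀ i, ∑ j, P i j = 1)
    (p : ℝ) (hp : p ∈ Set.Ioo (0 : ℝ) 1)
    (π : Fin N → ℝ)
    (hπ : ∀ i, π i = (p / N) * ∑ j, ∑' k : ℕ, (1 - p) ^ k * (P ^ k) j i) :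
    (∑ i, π i = 1) ∧
      ∀ i, ∑ j, π j * ((1 - p) * P j i + p / N) = π i := by
  obtain ⟨hp0, hp1⟩ := hp
  have hP : P ∈ rowStochastic ℝ (Fin N) := mem_rowStochastic_iff_sum.2 ⟨hnonneg, hrow⟩
  have hq0 : 0 ≤ 1 - p := by linarith
  have hq1 : 1 - p < 1 := by linarith
  have hπR : π = (fun _ => p / N) ᵥ* resolventSum (1 - p) P := by
    ext i
    simp only [hπ, vecMul, dotProduct, ← mul_sum, resolventSum_apply hP hq0 hq1]
  have hsum : ∑ i, π i = 1 := by
    have hN0 : (N : ℝ) ≠ 0 := Nat.cast_ne_zero.2 (by omega)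
    calc ∑ i, π i = π ⬝ᵥ 1 := by simp [dotProduct]
      _ = (fun _ => p / N) ⬝ᵥ ((1 - (1 - p))⁻¹ • 1) := by
        rw [hπR, ← dotProduct_mulVec, resolventSum_mulVec_one hP hq0 hq1]
      _ = 1 := by
        simp only [dotProduct, sub_sub_cancel, Pi.smul_apply, Pi.one_apply, smul_eq_mul, mul_one,
          sum_const, card_univ, Fintype.card_fin, nsmul_eq_mul]
        field_simp
  refine ⟨hsum, fun i => ?_⟩
  have hfix := congrFun (vecMul_resolventSum hP hq0 hq1 (fun _ => p / N)) i
  rw [← hπR] at hfix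
  calc ∑ j, π j * ((1 - p) * P j i + p / N)
      = (1 - p) * (π ᵥ* P) i + p / N * ∑ j, π j := by
        simp only [vecMul, dotProduct, mul_sum, ← sum_add_distrib]
        exact sum_congr rfl fun j _ => by ring
    _ = π i := by
        rw [hsum, hfix]
        simp only [mul_one, Pi.add_apply, Pi.smul_apply, smul_eq_mul]
        ring
end

section
/- Let G be a tree (a connected acyclic simple graph) on a vertex type V, and let i, j be vertices with dist_G(i, j) ≥ 2. Then there do not exist vertices i', i'' adjacent to i with i' ≠ i'' and vertices j', j'' adjacent to j with j' ≠ j'' such that dist_G(i', j') = dist_G(i, j) − 2 and dist_G(i'', j'') = dist_G(i, j) − 2. (Consequently, on a tree the sum over pairs of distinct neighbours (i',i'') of i and (j',j'') of j restricted to pairs satisfying dist(i',j') = dist(i'',j'') = dist(i,j) − 2 is empty, so the topological condition sufficient for variance reduction of the repelling-walk kernel estimator holds.) -/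
theorem tree_no_distinct_neighbour_pairs_reducing_distance
    {V : Type*} (G : SimpleGraph V) (hG : G.IsTree)
    (i j : V) (hdist : 2 ≤ G.dist i j) :
    ¬ ∃ (i' i'' j' j'' : V),
        G.Adj i i' ∧ G.Adj i i'' ∧ i' ≠ i'' ∧
        G.Adj j j' ∧ G.Adj j j'' ∧ j' ≠ j'' ∧
        G.dist i' j' = G.dist i j - 2 ∧ G.dist i'' j'' = G.dist i j - 2 := by
  rintro ⟨i', i'', j', j'', hi', hi'', hne, hj', hj'', _, hd1, hd2⟩
  have hconn := hG.isConnected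
  obtain ⟨p, hp⟩ := hconn.exists_walk_length_eq_dist i' j'
  obtain ⟨q, hq⟩ := hconn.exists_walk_length_eq_dist i'' j''
  set W : G.Walk i j := SimpleGraph.Walk.cons hi' (p.append hj'.symm.toWalk) with hW
  set W' : G.Walk i j := SimpleGraph.Walk.cons hi'' (q.append hj''.symm.toWalk) with hW'
  have hWlen : W.length = G.dist i j := by
    simp [hW, SimpleGraph.Walk.length_append, hp, hd1]
    omega
  have hW'len : W'.length = G.dist i j := by
    simp [hW', SimpleGraph.Walk.length_append, hq, hd2]
    omega
  have hWpath := W.isPath_of_length_eq_dist hWlen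
  have hW'path := W'.isPath_of_length_eq_dist hW'len
  have heq : W = W' := (hG.existsUnique_path i j).unique hWpath hW'path
  apply hne
  have : W.getVert 1 = W'.getVert 1 := by rw [heq]
  simpa [hW, hW'] using this
end

section
/- For all natural numbers a, b with a ≥ 2 and b ≥ 2: 32 · ( C(a+b−2, a−2) · C(a+b−2, b−2) + C(a+b−2, a−1)² ) ≤ 9 · C(a+b, a)². (This is the verification, on the two-dimensional square grid with node degree d = 4, of the topological condition M(l_{ij})² ≥ (d/(d−1))² times the sum over distinct neighbour pairs of products of shortest-path multiplicities at distance l_{ij} − 2, for nodes i = (0,0) and j = (a,b) with a, b ≥ 2: the shortest-path multiplicity is M = C(a+b,a) and the neighbour-pair sum evaluates to 2·(C(a+b−2,a−2)·C(a+b−2,b−2) + C(a+b−2,a−1)²).) -/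
theorem grid_topological_condition_choose (a b : ℕ) (ha : 2 ≤ a) (hb : 2 ≤ b) :
    32 * ((a + b - 2).choose (a - 2) * (a + b - 2).choose (b - 2)
          + ((a + b - 2).choose (a - 1)) ^ 2)
      ≤ 9 * ((a + b).choose a) ^ 2 := by
  obtain ⟨a, rfl⟩ : ∃ a', a = a' + 2 := ⟨a - 2, by omega⟩
  obtain ⟨b, rfl⟩ : ∃ b', b = b' + 2 := ⟨b - 2, by omega⟩
  have h1 : a + 2 + (b + 2) - 2 = a + b + 2 := by omega
  have h2 : a + 2 - 2 = a := by omega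
  have h3 : a + 2 - 1 = a + 1 := by omega
  have h4 : b + 2 - 2 = b := by omega
  have h5 : a + 2 + (b + 2) = a + b + 4 := by omega
  rw [h1, h2, h3, h4, h5]
  have hsym : (a + b + 2).choose b = (a + b + 2).choose (a + 2) := by
    rw [← Nat.choose_symm (by omega)]
    congr 1
    omega
  have p1 : (a + b + 4).choose (a + 2)
      = (a + b + 3).choose (a + 1) + (a + b + 3).choose (a + 2) :=
    Nat.choose_succ_succ (a + b + 3) (a + 1)
  have p2 : (a + b + 3).choose (a + 1)
      = (a + b + 2).choose a + (a + b + 2).choose (a + 1) :=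
    Nat.choose_succ_succ (a + b + 2) a
  have p3 : (a + b + 3).choose (a + 2)
      = (a + b + 2).choose (a + 1) + (a + b + 2).choose (a + 2) :=
    Nat.choose_succ_succ (a + b + 2) (a + 1)
  have hp : (a + b + 4).choose (a + 2)
      = (a + b + 2).choose a + 2 * (a + b + 2).choose (a + 1)
        + (a + b + 2).choose (a + 2) := by omega
  rw [hsym, hp]
  nlinarith [sq_nonneg ((a + b + 2).choose a + (a + b + 2).choose (a + 2)
      - 2 * (a + b + 2).choose (a + 1) : ℤ),
    sq_nonneg ((a + b + 2).choose a - (a + b + 2).choose (a + 2) : ℤ)]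
end
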